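/- Assume f(x) > 0 for all x ∈ (π̲, π̄) and t_s ≥ 3 t_k. Define ψ₂(p) = (t_s + t_k) F(p) − (t_s + t_k) F(p)² − t_k. Then there exists exactly one p̂ ∈ [π̲, π̄] with F(p̂) ≥ 1/2 and ψ₂(p̂) = 0. -/

import Mathlib

/-!
`F` is a continuous, strictly increasing bijection of `[π̲, π̄]` onto `[0, 1]`, because `f > 0` on
the open interval. Writing `u = F p`, the two conditions say that `u ≥ 1/2` is a root of
`(t_s + t_k) u (1 - u) = t_k`; since `t_s + t_k ≥ 4 t_k` this quadratic has real roots, the larger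
one `(1 + √(1 - 4 t_k / (t_s + t_k))) / 2` lies in `[1/2, 1)` and the smaller one lies below `1/2`.
So `p̂` is the unique preimage of that larger root under `F`.
-/

open Set MeasureTheory intervalIntegral

theorem StrictMonoOn.existsUnique_eq_of_continuousOn {g : ℝ → ℝ} {a b c : ℝ} (hab : a ≤ b)
    (hmono : StrictMonoOn g (Icc a b)) (hcont : ContinuousOn g (Icc a b))
    (hc : c ∈ Icc (g a) (g b)) : ∃! x, x ∈ Icc a b ∧ g x = c := by
  obtain ⟨x, hx, hgx⟩ := intermediate_value_Icc hab hcont hc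
  exact ⟨x, ⟨hx, hgx⟩, fun y ⟨hy, hgy⟩ => hmono.injOn hy hx (hgy.trans hgx.symm)⟩

theorem strictMonoOn_primitive_of_pos {f : ℝ → ℝ} {a b : ℝ} (hf : IntegrableOn f (Icc a b))
    (hpos : ∀ x ∈ Ioo a b, 0 < f x) : StrictMonoOn (fun x => ∫ t in a..x, f t) (Icc a b) := by
  have hint : ∀ x ∈ Icc a b, ∀ y ∈ Icc a b, IntervalIntegrable f volume x y := fun x hx y hy =>
    (hf.mono_set (uIcc_subset_Icc hx hy)).intervalIntegrable
  intro x hx y hy hxy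
  have ha : a ∈ Icc a b := left_mem_Icc.2 (hx.1.trans hx.2)
  have hdiff : (∫ t in a..y, f t) - ∫ t in a..x, f t = ∫ t in x..y, f t :=
    integral_interval_sub_left (hint a ha y hy) (hint a ha x hx)
  have hxy_pos : 0 < ∫ t in x..y, f t :=
    intervalIntegral_pos_of_pos_on (hint x hx y hy)
      (fun t ht => hpos t ⟨hx.1.trans_lt ht.1, ht.2.trans_le hy.2⟩) hxy
  simp only
  linarith

theorem continuousOn_primitive_Icc {f : ℝ → ℝ} {a b : ℝ} (hab : a ≤ b)
    (hf : IntegrableOn f (Icc a b)) : ContinuousOn (fun x => ∫ t in a..x, f t) (Icc a b) := by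
  rw [← uIcc_of_le hab] at hf ⊢
  exact continuousOn_primitive_interval hf

/-- The larger root of `a u - a u² = k`. -/
noncomputable def upperRoot (a k : ℝ) : ℝ := (1 + √(1 - 4 * k / a)) / 2

theorem half_le_and_quadratic_eq_zero_iff {a k u : ℝ} (ha : 0 < a) (hk : 4 * k ≤ a) :
    (1 / 2 ≤ u ∧ a * u - a * u ^ 2 - k = 0) ↔ u = upperRoot a k := by
  have hd : 0 ≤ 1 - 4 * k / a := by rw [sub_nonneg, div_le_one ha]; exact hk
  have hsquare : a * u - a * u ^ 2 - k = a / 4 * ((1 - 4 * k / a) - (2 * u - 1) ^ 2) := by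
    field_simp
    ring
  rw [hsquare, mul_eq_zero, or_iff_right (by positivity), sub_eq_zero, upperRoot,
    eq_div_iff two_ne_zero, show u * 2 = 1 + √_ ↔ √(1 - 4 * k / a) = 2 * u - 1 by
      constructor <;> intro h <;> linarith]
  constructor
  · rintro ⟨hu, hroot⟩
    exact (Real.sqrt_eq_iff_eq_sq hd (by linarith)).2 hroot
  · intro hroot
    have hu : 1 / 2 ≤ u := by linarith [hroot ▸ Real.sqrt_nonneg (1 - 4 * k / a)]
    exact ⟨hu, (Real.sqrt_eq_iff_eq_sq hd (by linarith)).1 hroot⟩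

theorem upperRoot_mem_Icc {a k : ℝ} (ha : 0 < a) (hk : 0 ≤ k) : upperRoot a k ∈ Icc 0 1 := by
  have hquot : 0 ≤ 4 * k / a := by positivity
  have hsqrt_le : √(1 - 4 * k / a) ≤ 1 := Real.sqrt_le_one.2 (by linarith)
  have := Real.sqrt_nonneg (1 - 4 * k / a)
  constructor <;> rw [upperRoot] <;> linarith

theorem stmt_8
    (πlo πhi : ℝ) (f F : ℝ → ℝ)
    (hlt : πlo < πhi)
    (hcont : ContinuousOn f (Set.Icc πlo πhi))
    (hone : (∫ x in πlo..πhi, f x) = 1)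
    (hF : ∀ p, F p = ∫ x in πlo..p, f x)
    (hpos : ∀ x ∈ Set.Ioo πlo πhi, 0 < f x)
    (tk ts : ℝ) (htk : 0 < tk) (h3 : 3 * tk ≤ ts)
    (ψ₂ : ℝ → ℝ)
    (hψ₂ : ∀ p, ψ₂ p = (ts + tk) * F p - (ts + tk) * (F p) ^ 2 - tk) :
    ∃! phat : ℝ, phat ∈ Set.Icc πlo πhi ∧ 1 / 2 ≤ F phat ∧ ψ₂ phat = 0 := by
  obtain rfl : F = fun p => ∫ x in πlo..p, f x := funext hF
  have hint : IntegrableOn f (Icc πlo πhi) := hcont.integrableOn_Icc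
  have hroot : upperRoot (ts + tk) tk ∈ Icc (∫ x in πlo..πlo, f x) (∫ x in πlo..πhi, f x) := by
    rw [integral_same, hone]
    exact upperRoot_mem_Icc (by linarith) htk.le
  have hcond : ∀ p, (1 / 2 ≤ (∫ x in πlo..p, f x) ∧ ψ₂ p = 0) ↔
      (∫ x in πlo..p, f x) = upperRoot (ts + tk) tk := fun p => by
    rw [hψ₂, ← half_le_and_quadratic_eq_zero_iff (by linarith) (by linarith)]
  simpa only [hcond] using
    (strictMonoOn_primitive_of_pos hint hpos).existsUnique_eq_of_continuousOn hlt.le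
      (continuousOn_primitive_Icc hlt.le hint) hroot
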